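/- arXiv:2205.14835 — 2 statements merged into one kernel-verified Lean document; each statement's English description precedes it below -/
import Mathlib

section
/- Let σ = (s_1,…,s_k) be a word in S, b ∈ {0,1}^k, s' ∈ S, and w ∈ W. If there exists i ∈ {1,…,k} such that s'·φ_{σ|_{i−1},b|_{i−1}}(w) = φ_{σ|_{i−1},b|_{i−1}}(w)·s_i, then φ_{σ,b}(s'w) = φ_{σ,b}(w); otherwise φ_{σ,b}(s'w) = s'·φ_{σ,b}(w). Moreover the map φ_{σ,b} : W → W is order-preserving for the left weak order. -/
open Polynomial

namespace Paper

variable {B W : Type*} [Group W] {M : CoxeterMatrix B} (cs : CoxeterSystem M W)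

/-- The standard parabolic subgroup `W_J` generated by the simple reflections in `J`. -/
def WJ (J : Set B) : Subgroup W :=
  Subgroup.closure (cs.simple '' J)

/-- `w` is a minimal-length representative of its right coset `W_J w`, i.e. `w ∈ ᴶW`. -/
def IsMinRep (J : Set B) (w : W) : Prop :=
  ∀ u ∈ WJ cs J, cs.length w ≤ cs.length (u * w)

open scoped Classical in
/-- `w ·_J s`: equals `w * s` if `w * s ∈ ᴶW`, and `w` otherwise. -/
noncomputable def mulJ (J : Set B) (w : W) (i : B) : W :=
  if IsMinRep cs J (w * cs.simple i) then w * cs.simple i else w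

/-- `φ_{J,s,b}` : for `b = 1` the Bruhat-maximum of `{w ·_J s, w}` (equivalently, the longer
of the two), for `b = 0` the Bruhat-minimum (the shorter of the two). -/
noncomputable def phiJ (J : Set B) (i : B) (b : Bool) (w : W) : W :=
  if b then (if cs.length w ≤ cs.length (mulJ cs J w i) then mulJ cs J w i else w)
  else (if cs.length (mulJ cs J w i) ≤ cs.length w then mulJ cs J w i else w)

/-- `φ_{J,σ|_k,b|_k}(w)`: the composition `φ_{J,s_k,b_k} ∘ ⋯ ∘ φ_{J,s_1,b_1}` over the
length-`k` prefix of the word, applied to `w`. -/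
noncomputable def phiJUpTo (J : Set B) {n : ℕ} (σ : Fin n → B) (b : Fin n → Bool)
    (k : ℕ) (w : W) : W :=
  ((List.ofFn fun i : Fin n => ((σ i : B), (b i : Bool))).take k).foldl
    (fun v p => phiJ cs J p.1 p.2 v) w

/-- `φ_{J,σ,b} = φ_{J,s_n,b_n} ∘ ⋯ ∘ φ_{J,s_1,b_1}`. -/
noncomputable def phiJSeq (J : Set B) {n : ℕ} (σ : Fin n → B) (b : Fin n → Bool) (w : W) : W :=
  phiJUpTo cs J σ b n w

/-- `φ_{s,b}(w)`: `max(ws, w)` for `b = 1`, `min(ws, w)` for `b = 0` (in Bruhat order;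
equivalently by length, since `w` and `ws` are Bruhat-comparable). -/
noncomputable def phi (i : B) (b : Bool) (w : W) : W :=
  if b then (if cs.length w ≤ cs.length (w * cs.simple i) then w * cs.simple i else w)
  else (if cs.length (w * cs.simple i) ≤ cs.length w then w * cs.simple i else w)

/-- `φ_{σ|_k,b|_k}(w)` (the case `J = ∅`). -/
noncomputable def phiUpTo {n : ℕ} (σ : Fin n → B) (b : Fin n → Bool) (k : ℕ) (w : W) : W :=
  ((List.ofFn fun i : Fin n => ((σ i : B), (b i : Bool))).take k).foldl
    (fun v p => phi cs p.1 p.2 v) w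

/-- `φ_{σ,b}(w)` (the case `J = ∅`). -/
noncomputable def phiSeq {n : ℕ} (σ : Fin n → B) (b : Fin n → Bool) (w : W) : W :=
  phiUpTo cs σ b n w

/-- `b` is a `(σ,J)`-good word for `w`: `φ_{σ,b}(w) = w`, and for each left descent
`s ∈ D_L(w) ∩ J` there is a position `i` with
`φ_{σ|_{i-1},b|_{i-1}}(w) · s_i = s · φ_{σ|_{i-1},b|_{i-1}}(w)`. -/
def Good (J : Set B) {n : ℕ} (σ : Fin n → B) (w : W) (b : Fin n → Bool) : Prop :=
  phiSeq cs σ b w = w ∧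
  ∀ i0 ∈ J, cs.length (cs.simple i0 * w) < cs.length w →
    ∃ i : Fin n,
      cs.simple i0 * phiUpTo cs σ b (i : ℕ) w = phiUpTo cs σ b (i : ℕ) w * cs.simple (σ i)

/-- `|b| = b_1 + ⋯ + b_n`. -/
def wt {n : ℕ} (b : Fin n → Bool) : ℕ := ∑ i, if b i then 1 else 0

/-- Left weak order: `w' ≤_L w` iff `w = u * w'` with `ℓ(w) = ℓ(u) + ℓ(w')`. -/
def leL (w' w : W) : Prop :=
  ∃ u : W, w = u * w' ∧ cs.length w = cs.length u + cs.length w'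

end Paper

/-!
Follow the trajectories `v_j = φ_{σ|_j,b|_j}(w)` and `v'_j = φ_{σ|_j,b|_j}(s'w)`. While
`s' v_j ≠ v_j s_{j+1}`, the square `v, s'v, vs, s'vs` (`v = v_j`, `s = s_{j+1}`) is flat,
`ℓ(s'vs) + ℓ(v) = ℓ(s'v) + ℓ(vs)`, so `φ_{s,b}` picks corresponding corners and
`v'_{j+1} = s' v_{j+1}`; once `s' v_j = v_j s_{j+1}`, the pairs `{v_j, v_j s}` and
`{s'v_j, s'v_j s}` coincide and the trajectories merge for good. Flatness is the lifting property
`ℓ(s'u) > ℓ(u), ℓ(s'us) < ℓ(us) ⇒ s'u = us`, which follows from the exchange property, itself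
a consequence of Tits' sign action of `W` on `W × {±1}`. Flatness also keeps `s'` an ascent along
the trajectory, which gives monotonicity for the left weak order one simple reflection at a time.
-/

namespace CoxeterSystem

variable {B W : Type*} [Group W] {M : CoxeterMatrix B} (cs : CoxeterSystem M W)

section Tits

variable [DecidableEq W]

/-- Tits' sign action of `s_i` on `W × ℤˣ`. A word acts on `(t, ε)` by flipping `ε` once for each
occurrence of `t` in its inversion sequence; since the action factors through `W`, the parity of
that count depends only on the product of the word. -/
def titsMap (i : B) : Function.End (W × ℤˣ) :=
  fun p => (cs.simple i * p.1 * cs.simple i, if p.1 = cs.simple i then -p.2 else p.2)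

theorem prod_reverse_map_titsMap_apply (ω : List B) (w : W) (ε : ℤˣ) :
    (ω.map cs.titsMap).reverse.prod (w, ε) =
      ((cs.wordProd ω)⁻¹ * w * cs.wordProd ω, ε * (-1) ^ (cs.leftInvSeq ω).count w) := by
  induction ω generalizing w ε with
  | nil => simp [Function.End.one_def]
  | cons i ω ih =>
    have hcount : (cs.leftInvSeq (i :: ω)).count w =
        (cs.leftInvSeq ω).count (cs.simple i * w * cs.simple i) +
          if cs.simple i = w then 1 else 0 := by
      have hconj : w = MulAut.conj (cs.simple i) (cs.simple i * w * cs.simple i) := by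
        simp [mul_assoc]
      rw [leftInvSeq, List.count_cons]
      nth_rw 1 [hconj]
      rw [List.count_map_of_injective _ _ (MulAut.conj _).injective]
      simp
    rw [List.map_cons, List.reverse_cons, List.prod_append, List.prod_singleton]
    change (ω.map cs.titsMap).reverse.prod (cs.titsMap i (w, ε)) = _
    rw [titsMap, ih, hcount, cs.wordProd_cons]
    refine Prod.ext (by simp [mul_assoc, cs.inv_simple]) ?_
    by_cases h : w = cs.simple i
    · simp [h, pow_succ]
    · simp [h, Ne.symm h]

theorem titsMap_mul_pow (i j : B) (m : ℕ) :
    (cs.titsMap i * cs.titsMap j) ^ m =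
      ((alternatingWord j i (2 * m)).map cs.titsMap).reverse.prod := by
  induction m with
  | zero => simp [alternatingWord]
  | succ m ih =>
    have hword : alternatingWord j i (2 * (m + 1)) = j :: i :: alternatingWord j i (2 * m) := by
      rw [show 2 * (m + 1) = 2 * m + 1 + 1 by ring, alternatingWord_succ', alternatingWord_succ']
      simp [parity_simps]
    rw [pow_succ, ih, hword]
    simp

theorem even_count_leftInvSeq_alternatingWord (i j : B) (w : W) :
    Even ((cs.leftInvSeq (alternatingWord j i (2 * M i j))).count w) := by
  set f : ℕ → W := fun k => cs.simple j * (cs.simple i * cs.simple j) ^ k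
  have hlis : cs.leftInvSeq (alternatingWord j i (2 * M i j)) = (List.range (2 * M i j)).map f := by
    refine List.ext_getElem (by simp) fun k hk _ => ?_
    rw [getElem_leftInvSeq_alternatingWord _ _ _ _ _ (by simpa using hk),
      prod_alternatingWord_eq_mul_pow]
    simp [f]
    congr 1
    omega
  have hperiodic : (fun k => f (M i j + k)) = f := by
    funext k
    simp [f, pow_add, cs.simple_mul_simple_pow]
  rw [hlis, two_mul, List.range_add, List.map_append, List.map_map]
  simp only [Function.comp_def, hperiodic, List.count_append]
  exact ⟨_, rfl⟩

theorem isLiftable_titsMap : M.IsLiftable cs.titsMap := by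
  intro i j
  rw [titsMap_mul_pow]
  funext ⟨w, ε⟩
  obtain ⟨c, hc⟩ := cs.even_count_leftInvSeq_alternatingWord i j w
  have hprod : cs.wordProd (alternatingWord j i (2 * M i j)) = 1 := by
    rw [prod_alternatingWord_eq_mul_pow]
    simp
  rw [prod_reverse_map_titsMap_apply, hprod, hc, ← two_mul, pow_mul]
  simp [Function.End.one_def]

theorem neg_one_pow_count_leftInvSeq_eq {ω ω' : List B} (h : cs.wordProd ω = cs.wordProd ω')
    (w : W) :
    (-1 : ℤˣ) ^ (cs.leftInvSeq ω).count w = (-1) ^ (cs.leftInvSeq ω').count w := by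
  have hlift : ∀ ρ : List B, (ρ.map cs.titsMap).reverse.prod =
      cs.lift ⟨cs.titsMap, cs.isLiftable_titsMap⟩ (cs.wordProd ρ)⁻¹ := fun ρ => by
    rw [← wordProd_reverse, wordProd, map_list_prod, List.map_map, ← List.map_reverse]
    congr 2
    exact funext fun i => (cs.lift_apply_simple cs.isLiftable_titsMap i).symm
  have := congrArg (fun f : Function.End (W × ℤˣ) => (f (w, 1)).2) (hlift ω)
  rw [h, ← hlift, prod_reverse_map_titsMap_apply, prod_reverse_map_titsMap_apply] at this
  simpa using this

end Tits

theorem simple_mem_leftInvSeq_of_length_simple_mul_lt {ω : List B} {i : B}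
    (h : cs.length (cs.simple i * cs.wordProd ω) < cs.length (cs.wordProd ω)) :
    cs.simple i ∈ cs.leftInvSeq ω := by
  classical
  obtain ⟨ω', hω', hπ'⟩ := cs.exists_isReduced (cs.simple i * cs.wordProd ω)
  have hnotmem : cs.simple i ∉ cs.leftInvSeq ω' := fun hmem => by
    have := (cs.isLeftInversion_of_mem_leftInvSeq hω' hmem).2
    rw [← hπ', cs.simple_mul_simple_cancel_left] at this
    omega
  have hprod : cs.wordProd (i :: ω') = cs.wordProd ω := by
    rw [cs.wordProd_cons, ← hπ', cs.simple_mul_simple_cancel_left]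
  have hcount : (cs.leftInvSeq (i :: ω')).count (cs.simple i) = 1 := by
    have hfix : MulAut.conj (cs.simple i) (cs.simple i) = cs.simple i := by simp
    rw [leftInvSeq, List.count_cons]
    nth_rw 1 [← hfix]
    rw [List.count_map_of_injective _ _ (MulAut.conj _).injective, List.count_eq_zero.2 hnotmem]
    simp
  have hparity := cs.neg_one_pow_count_leftInvSeq_eq hprod (cs.simple i)
  rw [hcount] at hparity
  refine List.count_pos_iff.1 (Nat.pos_of_ne_zero fun h0 => ?_)
  rw [h0] at hparity
  exact absurd hparity (by decide)

/-- Deodhar's lifting property (Property Z) for two simple reflections. -/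
theorem simple_mul_eq_mul_simple_of_length_lt {u : W} {i' i : B}
    (h₁ : cs.length u < cs.length (cs.simple i' * u))
    (h₂ : cs.length (cs.simple i' * u * cs.simple i) < cs.length (u * cs.simple i)) :
    cs.simple i' * u = u * cs.simple i := by
  obtain ⟨ω, hω, rfl⟩ := cs.exists_isReduced u
  have hπ : cs.wordProd (ω.concat i) = cs.wordProd ω * cs.simple i := cs.wordProd_concat i ω
  have hmem := cs.simple_mem_leftInvSeq_of_length_simple_mul_lt (by rwa [hπ, ← mul_assoc])
  rw [leftInvSeq_concat, List.concat_eq_append, List.mem_append, List.mem_singleton] at hmem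
  rcases hmem with hmem | hmem
  · have := (cs.isLeftInversion_of_mem_leftInvSeq hω hmem).2
    omega
  · rw [hmem]
    group

theorem length_simple_mul_mul_simple_of_ne {v : W} {i' i : B}
    (hne : cs.simple i' * v ≠ v * cs.simple i) :
    (cs.length (cs.simple i' * v * cs.simple i) : ℤ) + cs.length v =
      cs.length (cs.simple i' * v) + cs.length (v * cs.simple i) := by
  have hbottom : ¬(cs.length v < cs.length (cs.simple i' * v) ∧
      cs.length (cs.simple i' * v * cs.simple i) < cs.length (v * cs.simple i)) :=
    fun ⟨h₁, h₂⟩ => hne (cs.simple_mul_eq_mul_simple_of_length_lt h₁ h₂)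
  have htop : ¬(cs.length (cs.simple i' * v) < cs.length v ∧
      cs.length (v * cs.simple i) < cs.length (cs.simple i' * v * cs.simple i)) := by
    rintro ⟨h₁, h₂⟩
    refine hne ?_
    have := cs.simple_mul_eq_mul_simple_of_length_lt (u := cs.simple i' * v)
      (by rwa [cs.simple_mul_simple_cancel_left])
      (by rwa [cs.simple_mul_simple_cancel_left])
    rw [cs.simple_mul_simple_cancel_left] at this
    nth_rw 2 [this]
    rw [cs.simple_mul_simple_cancel_right]
  rcases cs.length_simple_mul v i' with h₁ | h₁ <;>
  rcases cs.length_mul_simple v i with h₂ | h₂ <;>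
  rcases cs.length_mul_simple (cs.simple i' * v) i with h₃ | h₃ <;>
  rcases cs.length_simple_mul (v * cs.simple i) i' with h₄ | h₄ <;>
  simp only [← mul_assoc] at h₄ <;> omega

end CoxeterSystem

namespace Paper

section

variable {B W : Type*} [Group W] {M : CoxeterMatrix B} (cs : CoxeterSystem M W)

theorem phi_simple_mul_of_eq {i' i : B} (b : Bool) {w : W}
    (h : cs.simple i' * w = w * cs.simple i) :
    phi cs i b (cs.simple i' * w) = phi cs i b w := by
  have := cs.length_mul_simple_ne w i
  rw [h]
  unfold phi
  rw [cs.simple_mul_simple_cancel_right]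
  split_ifs <;> first | rfl | omega

theorem phi_simple_mul_of_ne {i' i : B} (b : Bool) {w : W}
    (hne : cs.simple i' * w ≠ w * cs.simple i) :
    phi cs i b (cs.simple i' * w) = cs.simple i' * phi cs i b w := by
  have := cs.length_simple_mul_mul_simple_of_ne hne
  have := cs.length_mul_simple w i
  have := cs.length_mul_simple (cs.simple i' * w) i
  unfold phi
  split_ifs <;> first | rfl | omega | rw [mul_assoc]

theorem length_lt_length_simple_mul_phi {i' i : B} (b : Bool) {w : W}
    (hw : cs.length w < cs.length (cs.simple i' * w))
    (hne : cs.simple i' * w ≠ w * cs.simple i) :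
    cs.length (phi cs i b w) < cs.length (cs.simple i' * phi cs i b w) := by
  have := cs.length_simple_mul_mul_simple_of_ne hne
  have := cs.length_mul_simple w i
  have := cs.length_mul_simple (cs.simple i' * w) i
  unfold phi
  split_ifs <;> first | exact hw | (rw [← mul_assoc]; omega)

theorem phiUpTo_succ {n : ℕ} (σ : Fin n → B) (b : Fin n → Bool) {m : ℕ} (hm : m < n) (w : W) :
    phiUpTo cs σ b (m + 1) w = phi cs (σ ⟨m, hm⟩) (b ⟨m, hm⟩) (phiUpTo cs σ b m w) := by
  simp [phiUpTo, List.take_add_one, hm]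

/-- The trajectories of `w` and `s'w` under the maps `φ_{s_j,b_j}` merge within the first `m`
steps. -/
def MergesBefore {n : ℕ} (σ : Fin n → B) (b : Fin n → Bool) (i' : B) (w : W) (m : ℕ) : Prop :=
  ∃ i : Fin n, (i : ℕ) < m ∧
    cs.simple i' * phiUpTo cs σ b i w = phiUpTo cs σ b i w * cs.simple (σ i)

section Trajectory

variable {n : ℕ} (σ : Fin n → B) (b : Fin n → Bool) (i' : B) (w : W)

theorem mergesBefore_succ_iff {m : ℕ} (hm : m < n) :
    MergesBefore cs σ b i' w (m + 1) ↔ MergesBefore cs σ b i' w m ∨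
      cs.simple i' * phiUpTo cs σ b m w = phiUpTo cs σ b m w * cs.simple (σ ⟨m, hm⟩) := by
  constructor
  · rintro ⟨i, hi, h⟩
    rcases Nat.lt_succ_iff_lt_or_eq.1 hi with hi | rfl
    · exact Or.inl ⟨i, hi, h⟩
    · exact Or.inr h
  · rintro (⟨i, hi, h⟩ | h)
    · exact ⟨i, by omega, h⟩
    · exact ⟨⟨m, hm⟩, by simp, h⟩

theorem phiUpTo_simple_mul_of_not_mergesBefore {m : ℕ} (hm : m ≤ n)
    (h : ¬MergesBefore cs σ b i' w m) :
    phiUpTo cs σ b m (cs.simple i' * w) = cs.simple i' * phiUpTo cs σ b m w := by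
  induction m with
  | zero => rfl
  | succ m ih =>
    rw [mergesBefore_succ_iff cs σ b i' w hm, not_or] at h
    rw [phiUpTo_succ cs σ b hm, phiUpTo_succ cs σ b hm, ih (by omega) h.1,
      phi_simple_mul_of_ne cs _ h.2]

theorem phiUpTo_simple_mul_of_mergesBefore {m : ℕ} (hm : m ≤ n)
    (h : MergesBefore cs σ b i' w m) :
    phiUpTo cs σ b m (cs.simple i' * w) = phiUpTo cs σ b m w := by
  induction m with
  | zero => obtain ⟨_, hi, _⟩ := h; omega
  | succ m ih =>
    rw [phiUpTo_succ cs σ b hm, phiUpTo_succ cs σ b hm]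
    by_cases hprev : MergesBefore cs σ b i' w m
    · rw [ih (by omega) hprev]
    · have hmeet := ((mergesBefore_succ_iff cs σ b i' w hm).1 h).resolve_left hprev
      rw [phiUpTo_simple_mul_of_not_mergesBefore cs σ b i' w (by omega) hprev,
        phi_simple_mul_of_eq cs _ hmeet]

theorem length_lt_length_simple_mul_phiUpTo {m : ℕ} (hm : m ≤ n)
    (hw : cs.length w < cs.length (cs.simple i' * w)) (h : ¬MergesBefore cs σ b i' w m) :
    cs.length (phiUpTo cs σ b m w) < cs.length (cs.simple i' * phiUpTo cs σ b m w) := by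
  induction m with
  | zero => exact hw
  | succ m ih =>
    rw [mergesBefore_succ_iff cs σ b i' w hm, not_or] at h
    rw [phiUpTo_succ cs σ b hm]
    exact length_lt_length_simple_mul_phi cs _ (ih (by omega) h.1) h.2

end Trajectory

theorem leL_refl (v : W) : leL cs v v :=
  ⟨1, by rw [one_mul], by rw [cs.length_one, zero_add]⟩

theorem leL_trans {u v w : W} (huv : leL cs u v) (hvw : leL cs v w) : leL cs u w := by
  obtain ⟨x, rfl, hx⟩ := huv
  obtain ⟨y, rfl, hy⟩ := hvw
  refine ⟨y * x, by rw [mul_assoc], ?_⟩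
  have := cs.length_mul_le y x
  have := cs.length_mul_le (y * x) u
  rw [mul_assoc] at this
  omega

theorem leL_simple_mul {x : W} {i : B} (h : cs.length x < cs.length (cs.simple i * x)) :
    leL cs x (cs.simple i * x) := by
  refine ⟨cs.simple i, rfl, ?_⟩
  have := cs.length_simple_mul x i
  rw [cs.length_simple]
  omega

theorem leL_map_of_leL_map_simple_mul (f : W → W)
    (hf : ∀ x i, cs.length x < cs.length (cs.simple i * x) → leL cs (f x) (f (cs.simple i * x)))
    {v v' : W} (h : leL cs v v') : leL cs (f v) (f v') := by
  obtain ⟨u, rfl, hlen⟩ := h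
  obtain ⟨ω, hω, rfl⟩ := cs.exists_isReduced u
  rw [hω.eq] at hlen
  clear hω
  induction ω with
  | nil => simpa using leL_refl cs (f v)
  | cons i ω ih =>
    rw [cs.wordProd_cons, mul_assoc] at hlen ⊢
    have := cs.length_mul_le (cs.wordProd ω) v
    have := cs.length_wordProd_le ω
    have := cs.length_simple_mul (cs.wordProd ω * v) i
    simp only [List.length_cons] at hlen
    exact leL_trans cs (ih (by omega)) (hf _ i (by omega))

theorem leL_phiSeq_simple_mul {n : ℕ} (σ : Fin n → B) (b : Fin n → Bool) {x : W} {i : B}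
    (hx : cs.length x < cs.length (cs.simple i * x)) :
    leL cs (phiSeq cs σ b x) (phiSeq cs σ b (cs.simple i * x)) := by
  by_cases h : MergesBefore cs σ b i x n
  · rw [phiSeq, phiSeq, phiUpTo_simple_mul_of_mergesBefore cs σ b i x le_rfl h]
    exact leL_refl cs _
  · rw [phiSeq, phiSeq, phiUpTo_simple_mul_of_not_mergesBefore cs σ b i x le_rfl h]
    exact leL_simple_mul cs (length_lt_length_simple_mul_phiUpTo cs σ b i x le_rfl hx h)

end

/-- For a word `σ = (s_1,…,s_k)`, `b ∈ {0,1}^k`, `s' ∈ S` and `w ∈ W`: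
if there is `i` with `s'·φ_{σ|_{i-1},b|_{i-1}}(w) = φ_{σ|_{i-1},b|_{i-1}}(w)·s_i` then
`φ_{σ,b}(s'w) = φ_{σ,b}(w)`; otherwise `φ_{σ,b}(s'w) = s'·φ_{σ,b}(w)`. Moreover
`φ_{σ,b} : W → W` is order-preserving for the left weak order. -/
theorem phiSeq_mul_simple_left {B W : Type*} [Group W] {M : CoxeterMatrix B}
    (cs : CoxeterSystem M W) {k : ℕ} (σ : Fin k → B) (b : Fin k → Bool) (i' : B) (w : W) :
    ((∃ i : Fin k,
        cs.simple i' * phiUpTo cs σ b (i : ℕ) w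
          = phiUpTo cs σ b (i : ℕ) w * cs.simple (σ i)) →
      phiSeq cs σ b (cs.simple i' * w) = phiSeq cs σ b w) ∧
    ((¬ ∃ i : Fin k,
        cs.simple i' * phiUpTo cs σ b (i : ℕ) w
          = phiUpTo cs σ b (i : ℕ) w * cs.simple (σ i)) →
      phiSeq cs σ b (cs.simple i' * w) = cs.simple i' * phiSeq cs σ b w) ∧
    (∀ v v' : W, leL cs v v' → leL cs (phiSeq cs σ b v) (phiSeq cs σ b v')) := by
  have hmerge : MergesBefore cs σ b i' w k ↔ ∃ i : Fin k,
      cs.simple i' * phiUpTo cs σ b i w = phiUpTo cs σ b i w * cs.simple (σ i) := by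
    simp [MergesBefore]
  exact ⟨fun h => phiUpTo_simple_mul_of_mergesBefore cs σ b i' w le_rfl (hmerge.2 h),
    fun h => phiUpTo_simple_mul_of_not_mergesBefore cs σ b i' w le_rfl (mt hmerge.1 h),
    fun _ _ => leL_map_of_leL_map_simple_mul cs _ fun _ _ => leL_phiSeq_simple_mul cs σ b⟩

end Paper
end

section
/- Let J ⊆ S, w̄ ∈ ^JW, σ a word in S of length n, and b ∈ {0,1}^n with φ_{J,σ,b}(w̄) = w̄, and let φ denote the restriction of φ_{σ,b} to the coset W_J w̄ (which maps W_J w̄ into itself). Let w be a fixed point of φ that is minimal in left weak order among all fixed points of φ, let ŵ ≠ w be a fixed point of φ with w <_L ŵ, and let w <_L w_1 <_L ⋯ <_L w_k <_L ŵ be a saturated chain in (W_J w̄, ≤_L). Then every w_i (i = 1,…,k) is a fixed point of φ. In particular, there exists s' ∈ J with ℓ(s'ŵ) < ℓ(ŵ) such that s'ŵ is a fixed point of φ. -/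
open Polynomial

/-!
Write `f = φ_{σ,b}`. Each `φ_{s,b}`, and hence their composite `f`, sends a cover
`x ⋖_L s_t x` of the left weak order either to a single element or to a cover
`f x ⋖_L s_t (f x)`; the only non-trivial case is `ℓ(xs) > ℓ(x)`, `ℓ(s_t x s) < ℓ(s_t x)`,
where the lifting property gives `s_t x = xs`. So along the chain `w = c_0 ⋖ ⋯ ⋖ c_{k+1} = ŵ`
the length of `f c_i` grows by at most one per step, and it grows from `ℓ(w)` to
`ℓ(ŵ) = ℓ(w) + k + 1`; hence every step is a cover and `f c_{i+1} = s_t (f c_i) = c_{i+1}`.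
For the last step `c_k = s' ŵ` we get `s' ∈ J` because `c_k` and `ŵ` lie in the same coset
`W_J w̄`, and an element of `W_J` of length one is a simple reflection of `J`.

The lifting property follows from the exchange property, which is proved with the
permutation representation of `W` on `W × ℤ/2` with `s_i (t, a) = (s_i t s_i, a + [t = s_i])`:
it shows that the parity of the number of occurrences of `t` in the left inversion sequence
of a word depends only on the element the word represents.
-/

namespace Paper

section

open CoxeterSystem
open scoped Classical

variable {B W : Type*} [Group W] {M : CoxeterMatrix B} (cs : CoxeterSystem M W)

local prefix:100 "s" => cs.simple
local prefix:100 "π" => cs.wordProd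
local prefix:100 "ℓ" => cs.length
local prefix:100 "lis " => cs.leftInvSeq

section SignRepresentation

lemma simple_mul_mul_simple_eq_simple_iff (i : B) (t : W) :
    s i * t * s i = s i ↔ t = s i := by
  constructor
  · intro h
    simpa [mul_assoc] using congrArg (fun x => s i * x * s i) h
  · rintro rfl
    simp [cs.simple_mul_simple_self]

noncomputable def signPerm (i : B) : Equiv.Perm (W × ZMod 2) :=
  Function.Involutive.toPerm
    (fun p => (s i * p.1 * s i, if p.1 = s i then p.2 + 1 else p.2)) (by
      rintro ⟨t, a⟩
      have hconj : s i * (s i * t * s i) * s i = t := by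
        simp [mul_assoc, cs.simple_mul_simple_self]
      simp only [hconj, simple_mul_mul_simple_eq_simple_iff]
      split_ifs <;> simp [add_assoc, CharTwo.add_self_eq_zero])

lemma signPerm_apply (i : B) (t : W) (a : ZMod 2) :
    signPerm cs i (t, a) = (s i * t * s i, if t = s i then a + 1 else a) := rfl

lemma count_leftInvSeq_cons (i : B) (ω : List B) (t : W) :
    (lis (i :: ω)).count t = (lis ω).count (s i * t * s i) + if t = s i then 1 else 0 := by
  have hconj : MulAut.conj (s i) (s i * t * s i) = t := by
    simp [mul_assoc, cs.simple_mul_simple_self]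
  have hmap : ((lis ω).map (MulAut.conj (s i))).count t = (lis ω).count (s i * t * s i) := by
    conv_lhs => rw [← hconj]
    exact List.count_map_of_injective _ _ (MulAut.conj (s i)).injective _
  rw [leftInvSeq, List.count_cons, hmap]
  exact congrArg _ (if_congr (beq_iff_eq.trans eq_comm) rfl rfl)

lemma prod_map_signPerm_apply (ω : List B) (t : W) (a : ZMod 2) :
    (ω.map (signPerm cs)).prod ((π ω)⁻¹ * t * π ω, a) = (t, a + (lis ω).count t) := by
  induction ω generalizing t a with
  | nil => simp
  | cons i ω ih =>
    have h := ih (s i * t * s i) a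
    rw [cs.wordProd_cons, List.map_cons, List.prod_cons, Equiv.Perm.mul_apply,
      show (s i * π ω)⁻¹ * t * (s i * π ω) = (π ω)⁻¹ * (s i * t * s i) * π ω by
        simp [mul_assoc, cs.inv_simple],
      h, signPerm_apply, count_leftInvSeq_cons, simple_mul_mul_simple_eq_simple_iff]
    simp only [Prod.mk.injEq]
    constructor
    · simp [mul_assoc, cs.simple_mul_simple_self]
    · split_ifs <;> push_cast <;> ring

lemma alternatingWord_two_mul_succ (i i' : B) (m : ℕ) :
    alternatingWord i i' (2 * (m + 1)) = i :: i' :: alternatingWord i i' (2 * m) := by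
  rw [show 2 * (m + 1) = 2 * m + 1 + 1 by ring, alternatingWord_succ', alternatingWord_succ']
  simp [parity_simps]

lemma prod_map_alternatingWord_two_mul {G : Type*} [Monoid G] (f : B → G) (i i' : B) (m : ℕ) :
    ((alternatingWord i i' (2 * m)).map f).prod = (f i * f i') ^ m := by
  induction m with
  | zero => simp [alternatingWord]
  | succ m ih => rw [alternatingWord_two_mul_succ, List.map_cons, List.map_cons, List.prod_cons,
      List.prod_cons, ih, pow_succ', mul_assoc]

lemma leftInvSeq_alternatingWord_two_mul (i i' : B) (m : ℕ) :
    lis (alternatingWord i i' (2 * m)) =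
      (List.range (2 * m)).map (fun k => s i * (s i' * s i) ^ k) := by
  refine List.ext_getElem (by simp) fun k hk _ => ?_
  rw [getElem_leftInvSeq_alternatingWord cs i i' m k (by simpa using hk),
    prod_alternatingWord_eq_mul_pow]
  simp [Nat.not_even_bit1, show (2 * k + 1) / 2 = k by omega]

lemma even_count_leftInvSeq_braid (i i' : B) (t : W) :
    Even ((lis (alternatingWord i i' (2 * M i i'))).count t) := by
  have hperiodic : ∀ k, s i * (s i' * s i) ^ (M i i' + k) = s i * (s i' * s i) ^ k := by
    intro k
    rw [pow_add, cs.simple_mul_simple_pow', one_mul]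
  rw [leftInvSeq_alternatingWord_two_mul, two_mul, List.range_add, List.map_append, List.map_map,
    List.count_append]
  simp only [Function.comp_def, hperiodic]
  exact ⟨_, rfl⟩

lemma isLiftable_signPerm : M.IsLiftable (signPerm cs) := by
  intro i i'
  rw [← prod_map_alternatingWord_two_mul]
  ext1 ⟨t, a⟩
  have hπ : π (alternatingWord i i' (2 * M i i')) = 1 := by
    rw [wordProd, prod_map_alternatingWord_two_mul, cs.simple_mul_simple_pow]
  classical
  have h := prod_map_signPerm_apply cs (alternatingWord i i' (2 * M i i')) t a
  rw [hπ, inv_one, one_mul, mul_one, (ZMod.natCast_eq_zero_iff_even).mpr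
    (even_count_leftInvSeq_braid cs i i' t), add_zero] at h
  exact h

noncomputable def signRep : W →* Equiv.Perm (W × ZMod 2) :=
  cs.lift ⟨signPerm cs, isLiftable_signPerm cs⟩

lemma signRep_wordProd (ω : List B) : signRep cs (π ω) = (ω.map (signPerm cs)).prod := by
  rw [wordProd, map_list_prod, List.map_map]
  congr 1
  exact List.map_congr_left fun i _ => cs.lift_apply_simple (isLiftable_signPerm cs) i

lemma count_leftInvSeq_cast_eq_of_wordProd_eq {ω ω' : List B} (h : π ω = π ω') (t : W) :
    ((lis ω).count t : ZMod 2) = (lis ω').count t := by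
  have h' := congrArg (fun g => (signRep cs g ((π ω)⁻¹ * t * π ω, 0)).2) h
  simp only [signRep_wordProd, prod_map_signPerm_apply] at h'
  rw [h] at h'
  simpa [prod_map_signPerm_apply] using h'

end SignRepresentation

section Exchange

theorem simple_mem_leftInvSeq_of_isLeftDescent {ω : List B} {i : B}
    (h : cs.IsLeftDescent (π ω) i) : s i ∈ lis ω := by
  obtain ⟨ω₂, hred, hω₂⟩ := cs.exists_isReduced (s i * π ω)
  have hnot : s i ∉ lis ω₂ := fun hmem => by
    have := (cs.isLeftInversion_of_mem_leftInvSeq hred hmem).2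
    rw [← hω₂, cs.simple_mul_simple_cancel_left] at this
    exact absurd h (not_lt.mpr this.le)
  have hπ : π ω = π (i :: ω₂) := by
    rw [cs.wordProd_cons, ← hω₂, cs.simple_mul_simple_cancel_left]
  have hcount := count_leftInvSeq_cast_eq_of_wordProd_eq cs hπ (s i)
  rw [count_leftInvSeq_cons, if_pos rfl, cs.simple_mul_simple_cancel_right,
    List.count_eq_zero.mpr hnot] at hcount
  refine List.count_pos_iff.mp (Nat.pos_of_ne_zero fun h0 => ?_)
  rw [h0] at hcount
  exact absurd hcount (by decide)

theorem exists_simple_mul_wordProd_eq_eraseIdx {ω : List B} {i : B}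
    (h : cs.IsLeftDescent (π ω) i) : ∃ j < ω.length, s i * π ω = π (ω.eraseIdx j) := by
  obtain ⟨j, hj, hget⟩ := List.mem_iff_getElem.mp (simple_mem_leftInvSeq_of_isLeftDescent cs h)
  refine ⟨j, by simpa using hj, ?_⟩
  rw [← cs.getD_leftInvSeq_mul_wordProd, List.getD_eq_getElem _ 1 hj, hget]

theorem exists_sublist_isReduced_wordProd_eq (ω : List B) :
    ∃ ω' : List B, ω'.Sublist ω ∧ cs.IsReduced ω' ∧ π ω' = π ω := by
  induction ω with
  | nil => exact ⟨[], List.Sublist.refl _, by simp [CoxeterSystem.IsReduced], rfl⟩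
  | cons i ω ih =>
    obtain ⟨ω', hsub, hred, hπ⟩ := ih
    rcases cs.length_simple_mul (π ω') i with hlen | hlen
    · refine ⟨i :: ω', hsub.cons_cons i, ?_, by rw [cs.wordProd_cons, cs.wordProd_cons, hπ]⟩
      rw [CoxeterSystem.IsReduced, cs.wordProd_cons, hlen, hred, List.length_cons]
    · obtain ⟨j, hj, hexch⟩ :=
        exists_simple_mul_wordProd_eq_eraseIdx cs (show cs.IsLeftDescent (π ω') i by
          unfold IsLeftDescent; omega)
      refine ⟨ω'.eraseIdx j, ((List.eraseIdx_sublist _ j).trans hsub).cons i, ?_, ?_⟩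
      · rw [CoxeterSystem.IsReduced, ← hexch, List.length_eraseIdx_of_lt hj]
        rw [CoxeterSystem.IsReduced] at hred
        omega
      · rw [← hexch, cs.wordProd_cons, hπ]

/-- The lifting property. -/
theorem simple_mul_eq_mul_simple_of_isRightDescent {x : W} {t i : B}
    (ht : ℓ (s t * x) = ℓ x + 1) (hi : ℓ (x * s i) = ℓ x + 1)
    (h : cs.IsRightDescent (s t * x) i) : s t * x = x * s i := by
  unfold IsRightDescent at h
  obtain ⟨ω, hred, rfl⟩ := cs.exists_isReduced x
  have hdesc : cs.IsLeftDescent (π (ω ++ [i])) t := by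
    unfold IsLeftDescent
    rw [cs.wordProd_append, cs.wordProd_singleton, ← mul_assoc]
    omega
  obtain ⟨j, hj, hexch⟩ := exists_simple_mul_wordProd_eq_eraseIdx cs hdesc
  rw [List.length_append, List.length_singleton] at hj
  rcases Nat.lt_succ_iff_lt_or_eq.mp hj with hj | rfl
  · rw [List.eraseIdx_append_of_lt_length hj, cs.wordProd_append, cs.wordProd_append,
      ← mul_assoc, mul_left_inj] at hexch
    have := cs.length_wordProd_le (ω.eraseIdx j)
    rw [← hexch, List.length_eraseIdx_of_lt hj, ← hred] at this
    omega
  · rw [List.eraseIdx_append_of_length_le le_rfl, Nat.sub_self, List.eraseIdx_cons_zero,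
      List.append_nil, cs.wordProd_append, cs.wordProd_singleton, ← mul_assoc] at hexch
    rw [← mul_left_inj (s i), hexch, cs.simple_mul_simple_cancel_right]

end Exchange

section Parabolic

lemma exists_word_of_mem_WJ {J : Set B} {u : W} (hu : u ∈ WJ cs J) :
    ∃ ω : List B, (∀ j ∈ ω, j ∈ J) ∧ π ω = u := by
  induction hu using Subgroup.closure_induction with
  | mem x hx =>
    obtain ⟨j, hj, rfl⟩ := hx
    exact ⟨[j], by simpa using hj, cs.wordProd_singleton j⟩
  | one => exact ⟨[], by simp, cs.wordProd_nil⟩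
  | mul x y _ _ hx hy =>
    obtain ⟨ω, hω, rfl⟩ := hx
    obtain ⟨ω', hω', rfl⟩ := hy
    exact ⟨ω ++ ω', fun j hj => (List.mem_append.mp hj).elim (hω j) (hω' j),
      cs.wordProd_append _ _⟩
  | inv x _ hx =>
    obtain ⟨ω, hω, rfl⟩ := hx
    exact ⟨ω.reverse, fun j hj => hω j (List.mem_reverse.mp hj), cs.wordProd_reverse ω⟩

lemma exists_mem_eq_simple_of_mem_WJ {J : Set B} {u : W} (hu : u ∈ WJ cs J) (hlen : ℓ u = 1) :
    ∃ j ∈ J, u = s j := by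
  obtain ⟨ω, hJ, rfl⟩ := exists_word_of_mem_WJ cs hu
  obtain ⟨ω', hsub, hred, hπ⟩ := exists_sublist_isReduced_wordProd_eq cs ω
  rw [← hπ] at hlen ⊢
  obtain ⟨j, rfl⟩ := List.length_eq_one_iff.mp (hred.symm.trans hlen)
  exact ⟨j, hJ j (hsub.subset (List.mem_singleton_self j)), cs.wordProd_singleton j⟩

end Parabolic

section Covers

def RespectsLeftCovers (f : W → W) : Prop :=
  ∀ (x : W) (t : B), ℓ (s t * x) = ℓ x + 1 →
    f (s t * x) = f x ∨ (f (s t * x) = s t * f x ∧ ℓ (s t * f x) = ℓ (f x) + 1)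

lemma respectsLeftCovers_id : RespectsLeftCovers cs id :=
  fun _ _ hx => Or.inr ⟨rfl, hx⟩

variable {cs} in
lemma RespectsLeftCovers.comp {f g : W → W} (hg : RespectsLeftCovers cs g)
    (hf : RespectsLeftCovers cs f) : RespectsLeftCovers cs (g ∘ f) := by
  intro x t hx
  rcases hf x t hx with h | ⟨h, hlen⟩
  · exact Or.inl (congrArg g h)
  · rw [Function.comp_apply, Function.comp_apply, h]
    exact hg _ t hlen

lemma phi_of_length_mul_simple_eq_add_one {x : W} {i : B} (b : Bool)
    (h : ℓ (x * s i) = ℓ x + 1) :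
    phi cs i b x = if b then x * s i else x := by
  cases b <;> simp [phi, h]

lemma phi_of_length_mul_simple_add_one_eq {x : W} {i : B} (b : Bool)
    (h : ℓ (x * s i) + 1 = ℓ x) :
    phi cs i b x = if b then x else x * s i := by
  cases b <;> simp [phi] <;> omega

lemma respectsLeftCovers_phi (i : B) (b : Bool) : RespectsLeftCovers cs (phi cs i b) := by
  intro x t hx
  rcases cs.length_mul_simple x i with hxi | hxi
  · rcases cs.length_mul_simple (s t * x) i with hyi | hyi
    · rw [phi_of_length_mul_simple_eq_add_one cs b hxi,
        phi_of_length_mul_simple_eq_add_one cs b hyi]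
      right
      cases b
      · exact ⟨rfl, hx⟩
      · exact ⟨mul_assoc _ _ _, by simp only [↓reduceIte]; rw [← mul_assoc]; omega⟩
    · have hlift := simple_mul_eq_mul_simple_of_isRightDescent cs hx hxi
        (show ℓ (s t * x * s i) < ℓ (s t * x) by omega)
      rw [phi_of_length_mul_simple_eq_add_one cs b hxi,
        phi_of_length_mul_simple_add_one_eq cs b hyi]
      left
      cases b
      · simp [hlift, cs.simple_mul_simple_cancel_right]
      · simp [hlift]
  · have hyi : ℓ (s t * (x * s i)) = ℓ (x * s i) + 1 := by
      rcases cs.length_simple_mul (x * s i) t with h | h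
      · exact h
      · rcases cs.length_mul_simple (s t * x) i with h' | h' <;> rw [mul_assoc] at h' <;> omega
    rw [phi_of_length_mul_simple_add_one_eq cs b hxi,
      phi_of_length_mul_simple_add_one_eq cs b (by rw [mul_assoc]; omega)]
    right
    cases b
    · exact ⟨mul_assoc _ _ _, hyi⟩
    · exact ⟨rfl, hx⟩

lemma respectsLeftCovers_foldl_phi (L : List (B × Bool)) :
    RespectsLeftCovers cs (fun v => L.foldl (fun v p => phi cs p.1 p.2 v) v) := by
  induction L with
  | nil => exact respectsLeftCovers_id cs
  | cons p L ih => exact ih.comp (respectsLeftCovers_phi cs p.1 p.2)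

lemma respectsLeftCovers_phiSeq {n : ℕ} (σ : Fin n → B) (b : Fin n → Bool) :
    RespectsLeftCovers cs (phiSeq cs σ b) :=
  respectsLeftCovers_foldl_phi cs _

variable {cs}

lemma RespectsLeftCovers.length_le {f : W → W} (hf : RespectsLeftCovers cs f) {x : W} {t : B}
    (hx : ℓ (s t * x) = ℓ x + 1) : ℓ (f (s t * x)) ≤ ℓ (f x) + 1 := by
  rcases hf x t hx with h | ⟨h, hlen⟩ <;> rw [h] <;> omega

theorem RespectsLeftCovers.apply_eq_self_of_chain {f : W → W} (hf : RespectsLeftCovers cs f)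
    {c : ℕ → W} {m : ℕ}
    (hc : ∀ i < m, ∃ t, c (i + 1) = s t * c i ∧ ℓ (c (i + 1)) = ℓ (c i) + 1)
    (h0 : f (c 0) = c 0) (hm : f (c m) = c m) {i : ℕ} (hi : i ≤ m) : f (c i) = c i := by
  have hup : ∀ i ≤ m, f (c i) = c i ∨ ℓ (f (c i)) < ℓ (c i) := by
    intro i hi
    induction i with
    | zero => exact Or.inl h0
    | succ i ih =>
      obtain ⟨t, hct, hlen⟩ := hc i hi
      rw [hct] at hlen ⊢
      rcases ih (by omega) with hfix | hlt
      · rcases hf (c i) t hlen with h | ⟨h, -⟩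
        · exact Or.inr (by rw [h, hfix]; omega)
        · exact Or.inl (by rw [h, hfix])
      · exact Or.inr (by have := hf.length_le hlen; omega)
  have hdown : ∀ i ≤ m, ℓ (c i) ≤ ℓ (f (c i)) := by
    intro i hi
    induction hi using Nat.decreasingInduction with
    | self => rw [hm]
    | of_succ i hi ih =>
      obtain ⟨t, hct, hlen⟩ := hc i hi
      rw [hct] at ih hlen
      have := hf.length_le hlen
      omega
  exact (hup i hi).resolve_right (not_lt.mpr (hdown i hi))

end Covers

lemma exists_simple_of_leL_of_length_eq_add_one {x y : W} (h : leL cs x y)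
    (hlen : ℓ y = ℓ x + 1) :
    ∃ t : B, y = s t * x := by
  obtain ⟨u, rfl, hu⟩ := h
  obtain ⟨t, rfl⟩ := cs.length_eq_one_iff.mp (show ℓ u = 1 by omega)
  exact ⟨t, rfl⟩

end

theorem chain_of_fixed_points_general {B W : Type*} [Group W] {M : CoxeterMatrix B}
    (cs : CoxeterSystem M W) (J : Set B) {n : ℕ} (σ : Fin n → B) (b : Fin n → Bool)
    (wbar : W)
    (w what : W) (k : ℕ) (c : ℕ → W)
    (hwfix : phiSeq cs σ b w = w)
    (hhatfix : phiSeq cs σ b what = what)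
    (hc0 : c 0 = w) (hclast : c (k + 1) = what)
    (hcmem : ∀ i ≤ k + 1, ∃ u ∈ WJ cs J, c i = u * wbar)
    (hchain : ∀ i ≤ k, leL cs (c i) (c (i + 1)) ∧
      cs.length (c (i + 1)) = cs.length (c i) + 1) :
    (∀ i, 1 ≤ i → i ≤ k → phiSeq cs σ b (c i) = c i) ∧
    ∃ i' ∈ J, cs.length (cs.simple i' * what) < cs.length what ∧
      phiSeq cs σ b (cs.simple i' * what) = cs.simple i' * what := by
  have hstep : ∀ i < k + 1, ∃ t, c (i + 1) = cs.simple t * c i ∧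
      cs.length (c (i + 1)) = cs.length (c i) + 1 := by
    intro i hi
    obtain ⟨hle, hlen⟩ := hchain i (by omega)
    obtain ⟨t, ht⟩ := exists_simple_of_leL_of_length_eq_add_one cs hle hlen
    exact ⟨t, ht, hlen⟩
  have hfixed : ∀ i ≤ k + 1, phiSeq cs σ b (c i) = c i := fun i hi =>
    (respectsLeftCovers_phiSeq cs σ b).apply_eq_self_of_chain hstep (by rw [hc0, hwfix])
      (by rw [hclast, hhatfix]) hi
  refine ⟨fun i _ hi => hfixed i (by omega), ?_⟩
  obtain ⟨t, hct, hlen⟩ := hstep k (by omega)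
  obtain ⟨u, hu, hcu⟩ := hcmem k (by omega)
  obtain ⟨u', hu', hcu'⟩ := hcmem (k + 1) le_rfl
  have hmem : cs.simple t ∈ WJ cs J := by
    rw [hcu', hcu, ← mul_assoc] at hct
    rw [show cs.simple t = u' * u⁻¹ by rw [mul_right_cancel hct, mul_inv_cancel_right]]
    exact mul_mem hu' (inv_mem hu)
  obtain ⟨j, hj, hjt⟩ := exists_mem_eq_simple_of_mem_WJ cs hmem (cs.length_simple t)
  have hprev : cs.simple j * what = c k := by
    rw [← hjt, ← hclast, hct, cs.simple_mul_simple_cancel_left]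
  refine ⟨j, hj, ?_, ?_⟩
  · rw [hprev, ← hclast, hlen]
    omega
  · rw [hprev]
    exact hfixed k (by omega)

/-- Let `J ⊆ S`, `w̄ ∈ ᴶW`, `σ` a word of length `n`, `b ∈ {0,1}^n` with
`φ_{J,σ,b}(w̄) = w̄`, and let `φ = φ_{σ,b}` restricted to the coset `W_J w̄`. Let `w` be a
fixed point of `φ` minimal in left weak order among all fixed points in the coset, let
`ŵ ≠ w` be a fixed point with `w <_L ŵ`, and let `w <_L w_1 <_L ⋯ <_L w_k <_L ŵ` be a
saturated chain in `(W_J w̄, ≤_L)` (encoded by `c : ℕ → W` with `c 0 = w`,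
`c (k+1) = ŵ`, covering steps). Then every `w_i` is a fixed point of `φ`; in particular
there is `s' ∈ J` with `ℓ(s'ŵ) < ℓ(ŵ)` such that `s'ŵ` is a fixed point of `φ`. -/
theorem chain_of_fixed_points {B W : Type*} [Group W] {M : CoxeterMatrix B}
    (cs : CoxeterSystem M W) (J : Set B) {n : ℕ} (σ : Fin n → B) (b : Fin n → Bool)
    (wbar : W) (hbar : IsMinRep cs J wbar) (hfix : phiJSeq cs J σ b wbar = wbar)
    (w what : W) (k : ℕ) (c : ℕ → W)
    (hwmem : ∃ u ∈ WJ cs J, w = u * wbar)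
    (hwfix : phiSeq cs σ b w = w)
    (hwmin : ∀ v : W, (∃ u ∈ WJ cs J, v = u * wbar) → phiSeq cs σ b v = v →
      leL cs v w → v = w)
    (hhatmem : ∃ u ∈ WJ cs J, what = u * wbar)
    (hhatfix : phiSeq cs σ b what = what)
    (hne : w ≠ what) (hlt : leL cs w what)
    (hc0 : c 0 = w) (hclast : c (k + 1) = what)
    (hcmem : ∀ i ≤ k + 1, ∃ u ∈ WJ cs J, c i = u * wbar)
    (hchain : ∀ i ≤ k, leL cs (c i) (c (i + 1)) ∧
      cs.length (c (i + 1)) = cs.length (c i) + 1) :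
    (∀ i, 1 ≤ i → i ≤ k → phiSeq cs σ b (c i) = c i) ∧
    ∃ i' ∈ J, cs.length (cs.simple i' * what) < cs.length what ∧
      phiSeq cs σ b (cs.simple i' * what) = cs.simple i' * what :=
  chain_of_fixed_points_general cs J σ b wbar w what k c hwfix hhatfix hc0 hclast hcmem hchain

end Paper
end
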